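/- arXiv:1903.08765 — 2 statements merged into one kernel-verified Lean document; each statement's English description precedes it below -/
import Mathlib

section
/- Every iterated wreath product of cyclic groups W = C_{p_k} ≀ ⋯ ≀ C_{p_1} with k ≥ 2 factors has commutator width exactly 1, i.e., every element of the commutator subgroup of W is a single commutator. -/
/-!
An element `(f, r)` of `[B ≀ C_p, B ≀ C_p]` has `r = 1` and `∏ f i ∈ [B, B]`: both are read off the
homomorphism `B ≀ C_p → C_p × Bᵃᵇ`. Solving `f i = g (i - 1) * (g i)⁻¹` backwards from `g (-1) = 1`
leaves a defect `c` at `i = 0`, and `c ≡ ∏ f i` modulo `[B, B]`. If `c = ⁅a, x⁆` is a single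
commutator in `B`, then `(f, 1) = ⁅(δ₀ a, σ), (g * x, 1)⁆`, where `σ` generates `C_p` and `δ₀ a` is
`a` at `0` and `1` elsewhere. So "every element of the commutator subgroup is a commutator" passes from
`B` to `B ≀ C_p`, and by induction from the abelian base to every iterated wreath product. The
commutator subgroup is nontrivial because `⁅σ, δ₀ b⁆ ≠ 1` for every `b ≠ 1`.
-/

/-- The cyclic shift action of `C_p = ZMod p` on the direct power `B^p`. -/
def cycShift (B : Type*) [Group B] (p : ℕ) :
    Multiplicative (ZMod p) →* MulAut (ZMod p → B) where
  toFun k := MulEquiv.arrowCongr (Equiv.addRight (Multiplicative.toAdd k)) (MulEquiv.refl B)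
  map_one' := by
    ext f i
    simp [MulEquiv.arrowCongr]
    rfl
  map_mul' a b := by
    ext f i
    simp only [MulEquiv.arrowCongr, Equiv.coe_addRight, MulEquiv.coe_mk, Equiv.coe_fn_mk,
      MulEquiv.refl_apply, toAdd_mul, MulAut.mul_apply]
    congr 1
    simp only [Equiv.addRight_symm, Equiv.coe_addRight]
    abel

/-- The permutational wreath product `B ≀ C_p` with `C_p` acting on `p` points by cyclic shift. -/
abbrev Wr (B : Type*) [Group B] (p : ℕ) : Type _ :=
  (ZMod p → B) ⋊[cycShift B p] Multiplicative (ZMod p)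

/-- The iterated permutational wreath product `C_{p_k} ≀ ⋯ ≀ C_{p_1}`:
`iterWr p₁ [p₂, …, p_k]` has `C_{p₁}` as its top active group. -/
def iterWr : ℕ → List ℕ → GrpCat
  | p, [] => GrpCat.of (Multiplicative (ZMod p))
  | p, q :: l => GrpCat.of (Wr (iterWr q l) p)

open scoped commutatorElement

variable {B : Type*} [Group B] {p : ℕ}

section

variable [NeZero p]

lemma exists_eq_mulSingle_mul_mul_inv (f : ZMod p → B) :
    ∃ (c : B) (g : ZMod p → B),
      g (-1) = 1 ∧ ∀ i, f i = (Pi.mulSingle 0 c : ZMod p → B) i * g (i - 1) * (g i)⁻¹ := by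
  obtain ⟨n, rfl⟩ : ∃ n, p = n + 1 := Nat.exists_eq_add_one.mpr (Nat.pos_of_neZero p)
  let T : ℕ → B := fun k => ((List.range' k (n + 1 - k)).map fun j : ℕ => f j).prod
  have hT_last : T (n + 1) = 1 := by simp [T]
  have hT_succ : ∀ k ≤ n, T k = f k * T (k + 1) := fun k hk => by
    simp only [T, Nat.sub_add_eq, show n + 1 - k = n - k + 1 by omega, List.range'_succ,
      List.map_cons, List.prod_cons]
    rfl
  refine ⟨T 0, fun i => T (i.val + 1), by simp [ZMod.val_neg_one, hT_last], fun i => ?_⟩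
  obtain ⟨k, hk, rfl⟩ : ∃ k < n + 1, ((k : ℕ) : ZMod (n + 1)) = i :=
    ⟨i.val, i.val_lt, i.natCast_zmod_val⟩
  rcases k with _ | k
  · simp [ZMod.val_neg_one, hT_last, hT_succ 0 (Nat.zero_le n)]
  · have hne : ((k + 1 : ℕ) : ZMod (n + 1)) ≠ 0 := by
      rw [Ne, ZMod.natCast_eq_zero_iff]; exact Nat.not_dvd_of_pos_of_lt k.succ_pos hk
    beta_reduce
    rw [Pi.mulSingle_eq_of_ne hne, ZMod.val_cast_of_lt hk, Nat.cast_succ, add_sub_cancel_right,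
      ZMod.val_cast_of_lt (by omega), hT_succ (k + 1) (by omega), Nat.cast_succ]
    group

lemma Abelianization.of_eq_prod_of_eq_mulSingle_mul_mul_inv {f g : ZMod p → B} {c : B}
    (hf : ∀ i, f i = (Pi.mulSingle 0 c : ZMod p → B) i * g (i - 1) * (g i)⁻¹) :
    Abelianization.of c = ∏ i, Abelianization.of (f i) := by
  have hshift : ∏ i, Abelianization.of (g (i - 1)) = ∏ i, Abelianization.of (g i) :=
    (Equiv.subRight 1).prod_comp fun i => Abelianization.of (g i)
  have hsingle : ∏ i, Abelianization.of (Pi.mulSingle (0 : ZMod p) c i) = Abelianization.of c := by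
    rw [Fintype.prod_eq_single 0 fun i hi => by simp [hi]]
    simp
  simp only [hf, map_mul, map_inv, Finset.prod_mul_distrib, Finset.prod_inv_distrib, hshift, hsingle,
    mul_inv_cancel_right]

end

lemma cycShift_apply (k : Multiplicative (ZMod p)) (w : ZMod p → B) (i : ZMod p) :
    cycShift B p k w i = w (i - Multiplicative.toAdd k) := by
  show w ((Equiv.addRight (Multiplicative.toAdd k)).symm i) = _
  simp [Equiv.addRight_symm, sub_eq_add_neg]

namespace Wr

lemma commutatorElement_ofAdd_one (h g : ZMod p → B) :
    ⁅(⟨h, .ofAdd 1⟩ : Wr B p), (⟨g, 1⟩ : Wr B p)⁆ =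
      ⟨fun i => h i * g (i - 1) * (h i)⁻¹ * (g i)⁻¹, 1⟩ := by
  ext i
  · simp only [commutatorElement_def, SemidirectProduct.mul_left, SemidirectProduct.mul_right,
      SemidirectProduct.inv_left, SemidirectProduct.inv_right, cycShift_apply, Pi.mul_apply,
      Pi.inv_apply, toAdd_ofAdd, toAdd_inv, toAdd_mul, toAdd_one]
    group
  · simp [commutatorElement_def]

lemma commutator_ne_bot [Nontrivial B] (hp : 1 < p) : commutator (Wr B p) ≠ ⊥ := by
  have : Fact (1 < p) := ⟨hp⟩
  obtain ⟨b, hb⟩ := exists_ne (1 : B)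
  let c := ⁅(⟨1, .ofAdd 1⟩ : Wr B p), (⟨Pi.mulSingle 0 b, 1⟩ : Wr B p)⁆
  have hc_left : c.left 1 = b := by simp [c, commutatorElement_ofAdd_one]
  refine Subgroup.ne_bot_iff_exists_ne_one.mpr
    ⟨⟨c, Subgroup.commutator_mem_commutator (Subgroup.mem_top _) (Subgroup.mem_top _)⟩, ?_⟩
  intro h
  apply hb
  rw [← hc_left, show c = 1 from congr_arg Subtype.val h]
  rfl

section

variable [NeZero p]

def toProdAbelianization : Wr B p →* Multiplicative (ZMod p) × Abelianization B where
  toFun w := (w.right, ∏ i, Abelianization.of (w.left i))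
  map_one' := by simp
  map_mul' u v := by
    have hshift : ∏ i, Abelianization.of (cycShift B p u.right v.left i) =
        ∏ i, Abelianization.of (v.left i) := by
      simp only [cycShift_apply]
      exact (Equiv.subRight _).prod_comp fun i => Abelianization.of (v.left i)
    ext
    · simp
    · simp [Finset.prod_mul_distrib, hshift]

lemma commutator_subset_commutatorSet (hB : (commutator B : Set B) ⊆ commutatorSet B) :
    (commutator (Wr B p) : Set (Wr B p)) ⊆ commutatorSet (Wr B p) := by
  rintro ⟨f, r⟩ hw
  obtain ⟨rfl, hprod⟩ :=
    Prod.ext_iff.mp (Abelianization.commutator_subset_ker toProdAbelianization hw)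
  obtain ⟨c, g, hg, hf⟩ := exists_eq_mulSingle_mul_mul_inv f
  have hc : c ∈ commutator B := by
    rw [← Abelianization.ker_of, MonoidHom.mem_ker,
      Abelianization.of_eq_prod_of_eq_mulSingle_mul_mul_inv hf]
    exact hprod
  obtain ⟨a, x, rfl⟩ := hB hc
  refine ⟨⟨Pi.mulSingle 0 a, .ofAdd 1⟩, ⟨fun i => g i * x, 1⟩, ?_⟩
  rw [commutatorElement_ofAdd_one]
  ext i
  · dsimp only
    rw [hf]
    rcases eq_or_ne i 0 with rfl | hi
    · simp [hg, commutatorElement_def, mul_assoc]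
    · simp only [Pi.mulSingle_eq_of_ne hi]
      group
  · rfl

end

end Wr

lemma CommGroup.commutator_subset_commutatorSet (A : Type*) [CommGroup A] :
    (commutator A : Set A) ⊆ commutatorSet A := fun g hg => by
  rw [show g = 1 from Abelianization.commutator_subset_ker (MonoidHom.id A) hg]
  exact one_mem_commutatorSet A

lemma iterWr_commutator_subset_commutatorSet :
    ∀ (p : ℕ) (l : List ℕ), p ≠ 0 → (∀ q ∈ l, q ≠ 0) →
      (commutator (iterWr p l) : Set (iterWr p l)) ⊆ commutatorSet (iterWr p l)
  | p, [], _, _ => CommGroup.commutator_subset_commutatorSet (Multiplicative (ZMod p))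
  | p, q :: l, hp, hl =>
    have : NeZero p := ⟨hp⟩
    Wr.commutator_subset_commutatorSet <| iterWr_commutator_subset_commutatorSet q l
      (hl q List.mem_cons_self) fun r hr => hl r (List.mem_cons_of_mem q hr)

lemma iterWr_nontrivial {p : ℕ} (hp : 1 < p) (l : List ℕ) : Nontrivial (iterWr p l) := by
  have : Fact (1 < p) := ⟨hp⟩
  cases l with
  | nil => exact inferInstanceAs (Nontrivial (Multiplicative (ZMod p)))
  | cons q l => exact SemidirectProduct.inr_injective.nontrivial

/-- every iterated wreath product of (at least two) cyclic groups of
orders ≥ 2 has commutator width exactly 1: every element of its commutator subgroup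
is a single commutator, and its commutator subgroup is nontrivial. -/
theorem cw_iterWr_eq_one (p : ℕ) (l : List ℕ) (hp : 2 ≤ p) (hl : ∀ q ∈ l, 2 ≤ q)
    (hne : l ≠ []) :
    (∀ g ∈ commutator (iterWr p l), ∃ a b : (iterWr p l), g = ⁅a, b⁆) ∧
      commutator (iterWr p l) ≠ ⊥ := by
  refine ⟨fun g hg => ?_, ?_⟩
  · obtain ⟨a, b, hab⟩ := iterWr_commutator_subset_commutatorSet p l (Nat.ne_zero_of_lt hp)
      (fun q hq => Nat.ne_zero_of_lt (hl q hq)) hg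
    exact ⟨a, b, hab.symm⟩
  · obtain ⟨q, l, rfl⟩ := List.exists_cons_of_ne_nil hne
    have := iterWr_nontrivial (hl q List.mem_cons_self) l
    exact Wr.commutator_ne_bot hp
end

section
/- Every element of the commutator subgroup of the k-fold iterated wreath product B_k of C_2 can be written as a single commutator [f, l] with f ∈ B_k and l ∈ G_k, where G_k is the index-2 subgroup {(g_1,g_2)π ∈ B_k : g_1g_2 ∈ G_{k-1}} (G_1 = {e}). -/
/-- `BBgrp k` is the group `B_{k+1}`, the `(k+1)`-fold iterated wreath product of `C_2`:
`BBgrp 0 = C_2` and `BBgrp (k+1) = BBgrp k ≀ C_2`.  It is (isomorphic to) a Sylow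
2-subgroup of `S_{2^(k+1)}`. -/
def BBgrp : ℕ → GrpCat
  | 0 => GrpCat.of (Multiplicative (ZMod 2))
  | k + 1 => GrpCat.of (Wr (BBgrp k) 2)

/-- `GGset k` is the subset `G_{k+1}` of `B_{k+1} = BBgrp k`: `GGset 0 = {1}` and
`GGset (k+1) = {(g₁,g₂)π : g₁ * g₂ ∈ GGset k}`. -/
def GGset : (k : ℕ) → Set (BBgrp k)
  | 0 => {1}
  | k + 1 => {x : Wr (BBgrp k) 2 | x.left 0 * x.left 1 ∈ GGset k}

open scoped commutatorElement

/-!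
An element `g` of `[B ≀ C₂, B ≀ C₂]` has trivial top component, and its coordinates satisfy
`g₀ g₁ ∈ [B, B]`, as both are killed by homomorphisms to abelian groups. If `g₀ g₁ = ⁅f, l⁆`,
then `g = ⁅(f, g₀⁻¹ f), (1, l)σ⁆`, and the coordinate product of `(1, l)σ` is `l`. Thus
"single commutator with second entry in `S`" lifts from `B` to `B ≀ C₂` with
`{(l₀, l₁)π : l₀ l₁ ∈ S}`, which is exactly the recursion defining `G_k`; for `k = 1` the
group `C₂` is abelian.
-/

lemma zmod2_eq_zero_or_eq_one (i : ZMod 2) : i = 0 ∨ i = 1 := by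
  revert i; decide

namespace Wr

variable {B : Type*}

def pair (a b : B) : ZMod 2 → B := ![a, b]

@[simp] lemma pair_zero (a b : B) : pair a b 0 = a := rfl

@[simp] lemma pair_one (a b : B) : pair a b 1 = b := rfl

variable [Group B]

lemma cycShift_two_apply (s : Multiplicative (ZMod 2)) (f : ZMod 2 → B) (i : ZMod 2) :
    cycShift B 2 s f i = f (i + Multiplicative.toAdd s) := by
  show f ((Equiv.addRight (Multiplicative.toAdd s)).symm i) = _
  simp [ZMod.neg_eq_self_mod_two]

def leftProdAbelianization : Wr B 2 →* Abelianization B where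
  toFun x := Abelianization.of (x.left 0) * Abelianization.of (x.left 1)
  map_one' := by simp
  map_mul' x y := by
    simp only [SemidirectProduct.mul_left, Pi.mul_apply, cycShift_two_apply, map_mul]
    rcases zmod2_eq_zero_or_eq_one (Multiplicative.toAdd x.right) with h | h <;> rw [h]
    · simp only [add_zero]; ac_rfl
    · simp only [zero_add, CharTwo.add_self_eq_zero]; ac_rfl

lemma right_eq_one_of_mem_commutator {x : Wr B 2} (hx : x ∈ commutator (Wr B 2)) :
    x.right = 1 :=
  Abelianization.commutator_subset_ker SemidirectProduct.rightHom hx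

lemma left_zero_mul_left_one_mem_commutator {x : Wr B 2} (hx : x ∈ commutator (Wr B 2)) :
    x.left 0 * x.left 1 ∈ commutator B := by
  rw [← Abelianization.ker_of, MonoidHom.mem_ker, map_mul]
  exact Abelianization.commutator_subset_ker leftProdAbelianization hx

lemma eq_mk_pair_of_right_eq_one {x : Wr B 2} (h : x.right = 1) :
    x = ⟨pair (x.left 0) (x.left 1), 1⟩ := by
  refine SemidirectProduct.ext (funext fun i => ?_) h
  rcases zmod2_eq_zero_or_eq_one i with rfl | rfl <;> rfl

lemma mk_pair_eq_commutatorElement {a b f l : B} (h : a * b = ⁅f, l⁆) :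
    (⟨pair a b, 1⟩ : Wr B 2) =
      ⁅(⟨pair f (a⁻¹ * f), 1⟩ : Wr B 2), ⟨pair 1 l, Multiplicative.ofAdd 1⟩⁆ := by
  have hb : b = a⁻¹ * ⁅f, l⁆ := by rw [← h]; group
  refine SemidirectProduct.ext (funext fun i => ?_) (by simp [commutatorElement_def])
  rcases zmod2_eq_zero_or_eq_one i with rfl | rfl
  · simp [commutatorElement_def, cycShift_two_apply]
  · simp [commutatorElement_def, cycShift_two_apply, hb, CharTwo.add_self_eq_zero]; group

theorem exists_commutatorElement_of_mem_commutator (S : Set B)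
    (hB : ∀ g ∈ commutator B, ∃ f l : B, l ∈ S ∧ g = ⁅f, l⁆) :
    ∀ g ∈ commutator (Wr B 2), ∃ f l : Wr B 2, l.left 0 * l.left 1 ∈ S ∧ g = ⁅f, l⁆ := by
  intro g hg
  obtain ⟨f, l, hl, hfl⟩ := hB _ (left_zero_mul_left_one_mem_commutator hg)
  refine ⟨⟨pair f ((g.left 0)⁻¹ * f), 1⟩, ⟨pair 1 l, Multiplicative.ofAdd 1⟩, by simpa, ?_⟩
  rw [eq_mk_pair_of_right_eq_one (right_eq_one_of_mem_commutator hg)]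
  exact mk_pair_eq_commutatorElement hfl

end Wr

/-- every element of the commutator subgroup of `B_k` is a single
commutator `⁅f, l⁆` with `f ∈ B_k` and `l ∈ G_k`
(indexing: `BBgrp k` is `B_{k+1}`, `GGset k` is `G_{k+1}`). -/
theorem commutator_BB_single_commutator (k : ℕ) :
    ∀ g ∈ commutator (BBgrp k), ∃ f l : BBgrp k, l ∈ GGset k ∧ g = ⁅f, l⁆ := by
  induction k with
  | zero =>
    intro g hg
    have hC₂ : commutator (BBgrp 0) = ⊥ := commutator_eq_bot (Multiplicative (ZMod 2))
    rw [hC₂, Subgroup.mem_bot] at hg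
    exact ⟨1, 1, rfl, by simp [hg]⟩
  | succ k ih => exact Wr.exists_commutatorElement_of_mem_commutator (GGset k) ih
end
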